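/- arXiv:2407.19539 — 5 statements merged into one kernel-verified Lean document; each statement's English description precedes it below -/
import Mathlib

section
/- For a single Blaschke factor f(z) = (z+a)/(1+z·conj(a)) with |a|<1, and for 0<t<1, the area of the superlevel set {z in the unit disk : |f(z)|>t} equals π(1−t²)(1−|a|⁴t²)/(1−|a|²t²)². -/
/-!
The sublevel set `{|f| ≤ t}` is an Apollonius disc: with `d = 1 - |a|²t²`,
`|z + a|² - t²|1 + z ā|² = d (|z - c|² - r²)` for `c = -(1 - t²) a / d` and
`r = t (1 - |a|²) / d`, and for `t < 1` this closed disc lies inside the unit disc.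
The superlevel set is therefore an eccentric annulus, of area `π (1 - r²)`.
-/

open MeasureTheory Complex ComplexConjugate Metric

theorem Complex.volume_ball_sdiff_closedBall {x c : ℂ} {R r : ℝ} (hr : 0 ≤ r)
    (h : closedBall c r ⊆ ball x R) :
    volume (ball x R \ closedBall c r) = ENNReal.ofReal (Real.pi * (R ^ 2 - r ^ 2)) := by
  have hR : 0 ≤ R := (dist_nonneg.trans_lt (h (mem_closedBall_self hr))).le
  rw [measure_sdiff h measurableSet_closedBall.nullMeasurableSet measure_closedBall_lt_top.ne,
    Complex.volume_ball, Complex.volume_closedBall, ← ENNReal.ofReal_coe_nnreal,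
    NNReal.coe_real_pi, ← ENNReal.ofReal_pow hR, ← ENNReal.ofReal_pow hr,
    ← ENNReal.ofReal_mul (by positivity), ← ENNReal.ofReal_mul (by positivity),
    ← ENNReal.ofReal_sub _ (by positivity)]
  congr 1
  ring

section Blaschke

variable (a : ℂ) (t : ℝ)

noncomputable def blaschkeSublevelCenter : ℂ :=
  -(((1 - t ^ 2) / (1 - ‖a‖ ^ 2 * t ^ 2) : ℝ) : ℂ) * a

noncomputable def blaschkeSublevelRadius : ℝ :=
  t * (1 - ‖a‖ ^ 2) / (1 - ‖a‖ ^ 2 * t ^ 2)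

variable {a t}

theorem one_sub_norm_sq_mul_sq_pos (ha : ‖a‖ < 1) (ht₀ : 0 ≤ t) (ht₁ : t ≤ 1) :
    0 < 1 - ‖a‖ ^ 2 * t ^ 2 := by
  rw [← mul_pow, sub_pos]
  exact pow_lt_one₀ (by positivity)
    (mul_lt_one_of_nonneg_of_lt_one_left (norm_nonneg a) ha ht₁) two_ne_zero

theorem norm_add_sq_sub_sq_mul_norm_one_add_mul_conj_sq (z : ℂ)
    (hd : 1 - ‖a‖ ^ 2 * t ^ 2 ≠ 0) :
    ‖z + a‖ ^ 2 - t ^ 2 * ‖1 + z * conj a‖ ^ 2 =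
      (1 - ‖a‖ ^ 2 * t ^ 2) *
        (‖z - blaschkeSublevelCenter a t‖ ^ 2 - blaschkeSublevelRadius a t ^ 2) := by
  have h₁ : ‖z + a‖ ^ 2 = ‖z‖ ^ 2 + ‖a‖ ^ 2 + 2 * (z * conj a).re := by
    simp only [Complex.sq_norm, normSq_add]
  have h₂ : ‖1 + z * conj a‖ ^ 2 = ‖z‖ ^ 2 * ‖a‖ ^ 2 + 1 + 2 * (z * conj a).re := by
    simp only [add_comm (1 : ℂ), Complex.sq_norm, normSq_add, normSq_mul, normSq_conj, map_one,
      mul_one]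
  have h₃ (k : ℝ) : ‖z + k * a‖ ^ 2 = ‖z‖ ^ 2 + k ^ 2 * ‖a‖ ^ 2 + 2 * (k * (z * conj a).re) := by
    simp only [Complex.sq_norm, normSq_add, normSq_ofReal, map_mul, conj_ofReal,
      mul_left_comm z, re_ofReal_mul]
    ring
  rw [blaschkeSublevelCenter, neg_mul, sub_neg_eq_add, h₁, h₂, h₃, blaschkeSublevelRadius]
  field_simp
  ring

theorem blaschkeSublevelRadius_nonneg (ha : ‖a‖ < 1) (ht₀ : 0 ≤ t) (ht₁ : t ≤ 1) :
    0 ≤ blaschkeSublevelRadius a t := by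
  have : 0 ≤ 1 - ‖a‖ ^ 2 := by nlinarith [norm_nonneg a]
  exact div_nonneg (by positivity) (one_sub_norm_sq_mul_sq_pos ha ht₀ ht₁).le

theorem mul_norm_one_add_mul_conj_lt_norm_add_iff (z : ℂ) (ha : ‖a‖ < 1) (ht₀ : 0 ≤ t)
    (ht₁ : t ≤ 1) :
    t * ‖1 + z * conj a‖ < ‖z + a‖ ↔
      blaschkeSublevelRadius a t < ‖z - blaschkeSublevelCenter a t‖ := by
  have hd := one_sub_norm_sq_mul_sq_pos ha ht₀ ht₁
  rw [← pow_lt_pow_iff_left₀ (by positivity) (norm_nonneg _) two_ne_zero,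
    ← pow_lt_pow_iff_left₀ (blaschkeSublevelRadius_nonneg ha ht₀ ht₁) (norm_nonneg _)
      two_ne_zero,
    ← sub_pos, mul_pow, norm_add_sq_sub_sq_mul_norm_one_add_mul_conj_sq z hd.ne',
    mul_pos_iff_of_pos_left hd, sub_pos]

theorem one_add_mul_conj_ne_zero {z : ℂ} (hz : ‖z‖ < 1) (ha : ‖a‖ ≤ 1) :
    1 + z * conj a ≠ 0 := by
  intro h
  have : ‖z * conj a‖ < 1 := by
    rw [norm_mul, RCLike.norm_conj]
    nlinarith [norm_nonneg z]
  rw [eq_neg_of_add_eq_zero_right h, norm_neg, norm_one] at this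
  exact this.false

theorem setOf_lt_norm_blaschke_eq (ha : ‖a‖ < 1) (ht₀ : 0 ≤ t) (ht₁ : t ≤ 1) :
    {z : ℂ | ‖z‖ < 1 ∧ t < ‖(z + a) / (1 + z * conj a)‖} =
      ball 0 1 \ closedBall (blaschkeSublevelCenter a t) (blaschkeSublevelRadius a t) := by
  ext z
  simp only [Set.mem_ofPred_eq, Set.mem_sdiff, mem_ball, mem_closedBall, dist_eq_norm, sub_zero,
    not_le]
  refine and_congr_right fun hz => ?_
  rw [norm_div, lt_div_iff₀ (norm_pos_iff.2 (one_add_mul_conj_ne_zero hz ha.le)),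
    mul_norm_one_add_mul_conj_lt_norm_add_iff z ha ht₀ ht₁]

theorem closedBall_blaschkeSublevel_subset_ball (ha : ‖a‖ < 1) (ht₀ : 0 ≤ t) (ht₁ : t < 1) :
    closedBall (blaschkeSublevelCenter a t) (blaschkeSublevelRadius a t) ⊆ ball 0 1 := by
  have hd := one_sub_norm_sq_mul_sq_pos ha ht₀ ht₁.le
  refine closedBall_subset_ball' ?_
  rw [dist_zero_right, blaschkeSublevelCenter, blaschkeSublevelRadius, norm_mul, norm_neg,
    norm_real, Real.norm_of_nonneg (div_nonneg (by nlinarith) hd.le), div_mul_eq_mul_div,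
    ← add_div, div_lt_one hd]
  -- `1 - ‖a‖²t² - (‖a‖(1 - t²) + t(1 - ‖a‖²)) = (1 - ‖a‖)(1 - t)(1 - ‖a‖t)`
  nlinarith [mul_pos (mul_pos (sub_pos.2 ha) (sub_pos.2 ht₁))
    (by nlinarith [norm_nonneg a] : 0 < 1 - ‖a‖ * t)]

theorem one_sub_blaschkeSublevelRadius_sq (hd : 1 - ‖a‖ ^ 2 * t ^ 2 ≠ 0) :
    1 - blaschkeSublevelRadius a t ^ 2 =
      (1 - t ^ 2) * (1 - ‖a‖ ^ 4 * t ^ 2) / (1 - ‖a‖ ^ 2 * t ^ 2) ^ 2 := by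
  rw [blaschkeSublevelRadius, div_pow, one_sub_div (pow_ne_zero 2 hd)]
  ring

end Blaschke

theorem blaschke_factor_superlevel_area (a : ℂ) (ha : ‖a‖ < 1) (t : ℝ)
    (ht : t ∈ Set.Ioo (0:ℝ) 1) :
    volume {z : ℂ | ‖z‖ < 1 ∧ t < ‖(z + a) / (1 + z * conj a)‖} =
      ENNReal.ofReal (Real.pi * (1 - t ^ 2) * (1 - ‖a‖ ^ 4 * t ^ 2) /
        (1 - ‖a‖ ^ 2 * t ^ 2) ^ 2) := by
  obtain ⟨ht₀, ht₁⟩ := ht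
  rw [setOf_lt_norm_blaschke_eq ha ht₀.le ht₁.le,
    Complex.volume_ball_sdiff_closedBall (blaschkeSublevelRadius_nonneg ha ht₀.le ht₁.le)
      (closedBall_blaschkeSublevel_subset_ball ha ht₀.le ht₁),
    one_pow, one_sub_blaschkeSublevelRadius_sq (one_sub_norm_sq_mul_sq_pos ha ht₀.le ht₁.le).ne']
  congr 1
  ring
end

section
/- For |a|<1 and t ∈ [0,1], the integral ∫₀^{2π}∫_t^1 r·(1−|a|²)²/|1−re^{iτ}·conj(a)|⁴ dr dτ equals π(1−t²)(1−|a|⁴t²)/(1−|a|²t²)². -/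
/-!
On the unit circle `|1 - w z|⁴ = (1 - w z)² (z - conj w)² / z²`, so for `|w| < 1` the angular
integral of `|1 - w e^{iτ}|⁻⁴` is the contour integral of `z / ((1 - w z)² (z - conj w)²)`,
whose only pole inside the circle is a double pole at `conj w`. Partial fractions and the
Cauchy integral theorem give `2π (1 + |w|²) / (1 - |w|²)³`. After exchanging the order of
integration, the radial integral with `w = r conj a` is elementary: `r (1 + s r²) / (1 - s r²)³`
has antiderivative `r² / (2 (1 - s r²)²)`.
-/

open Complex ComplexConjugate intervalIntegral Set MeasureTheory Metric Real
open scoped Interval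

theorem one_sub_ne_zero_of_norm_lt_one {R : Type*} [NormedRing R] [NormOneClass R] {x : R}
    (hx : ‖x‖ < 1) : 1 - x ≠ 0 :=
  sub_ne_zero.2 (ne_of_apply_ne norm (by rw [norm_one]; exact hx.ne'))

theorem intervalIntegral_integral_swap_of_continuousOn {E : Type*} [NormedAddCommGroup E]
    [NormedSpace ℝ E] {f : ℝ → ℝ → E} {a b c d : ℝ}
    (hf : ContinuousOn (Function.uncurry f) ([[a, b]] ×ˢ [[c, d]])) :
    ∫ x in a..b, ∫ y in c..d, f x y = ∫ y in c..d, ∫ x in a..b, f x y := by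
  have hint : IntegrableOn (Function.uncurry f) (Ι a b ×ˢ Ι c d) :=
    (hf.integrableOn_compact (isCompact_uIcc.prod isCompact_uIcc)).mono_set
      (prod_mono uIoc_subset_uIcc uIoc_subset_uIcc)
  simp only [intervalIntegral_eq_integral_uIoc, MeasureTheory.integral_smul]
  rw [integral_integral_swap (by rwa [Measure.prod_restrict]), smul_comm]

theorem div_sq_mul_sq_eq_partialFraction {b c z : ℂ} (hd : 1 - b * c ≠ 0)
    (hu : 1 - c * z ≠ 0) (hv : z - b ≠ 0) :
    z / ((1 - c * z) ^ 2 * (z - b) ^ 2) =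
      b / (1 - b * c) ^ 2 * (z - b) ^ (-2 : ℤ) + (1 + b * c) / (1 - b * c) ^ 3 * (z - b)⁻¹ +
      (c / (1 - b * c) ^ 2 / (1 - c * z) ^ 2 +
        c * (1 + b * c) / (1 - b * c) ^ 3 / (1 - c * z)) := by
  -- `field_simp` only recognises the side conditions in its own normal form of the products.
  rw [mul_comm b c] at hd ⊢
  rw [mul_comm c z] at hu ⊢
  rw [zpow_neg, zpow_ofNat]
  field_simp
  ring

theorem circleIntegral_div_sq_mul_sq {b c : ℂ} (hb : ‖b‖ < 1) (hc : ‖c‖ < 1) :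
    ∮ z in C(0, 1), z / ((1 - c * z) ^ 2 * (z - b) ^ 2) =
      2 * π * I * (1 + b * c) / (1 - b * c) ^ 3 := by
  have hd : 1 - b * c ≠ 0 :=
    one_sub_ne_zero_of_norm_lt_one (by rw [norm_mul]; nlinarith [norm_nonneg b, norm_nonneg c])
  have hu : ∀ z ∈ closedBall (0 : ℂ) 1, 1 - c * z ≠ 0 := fun z hz =>
    one_sub_ne_zero_of_norm_lt_one (by
      rw [norm_mul]; nlinarith [norm_nonneg c, norm_nonneg z, mem_closedBall_zero_iff.1 hz])
  have hv : ∀ z ∈ sphere (0 : ℂ) 1, z - b ≠ 0 := by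
    intro z hz h
    rw [sub_eq_zero.1 h, mem_sphere_zero_iff_norm] at hz
    linarith
  have hholo : DiffContOnCl ℂ (fun z => c / (1 - b * c) ^ 2 / (1 - c * z) ^ 2 +
      c * (1 + b * c) / (1 - b * c) ^ 3 / (1 - c * z)) (ball 0 1) := by
    apply DifferentiableOn.diffContOnCl
    rw [closure_ball _ one_ne_zero]
    intro z hz
    have := hu z hz
    fun_prop (disch := simp [this])
  rw [circleIntegral.integral_congr zero_le_one fun z hz =>
      div_sq_mul_sq_eq_partialFraction hd (hu z (sphere_subset_closedBall hz)) (hv z hz),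
    circleIntegral.integral_add, circleIntegral.integral_add, circleIntegral.integral_const_mul,
    circleIntegral.integral_const_mul, circleIntegral.integral_sub_zpow_of_ne (by norm_num),
    circleIntegral.integral_sub_inv_of_mem_ball (by simpa using hb),
    hholo.circleIntegral_eq_zero zero_le_one]
  · field_simp
    ring
  all_goals
    refine ContinuousOn.circleIntegrable zero_le_one fun z hz => ?_
    have := hv z hz
    have := hu z (sphere_subset_closedBall hz)
    fun_prop (disch := simp [*])

theorem inv_norm_one_sub_mul_pow_four {w z : ℂ} (hz : ‖z‖ = 1) :
    ((‖1 - w * z‖ ^ 4)⁻¹ : ℝ) = z ^ 2 / ((1 - w * z) ^ 2 * (z - conj w) ^ 2) := by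
  have hz0 : z ≠ 0 := norm_ne_zero_iff.1 (by rw [hz]; exact one_ne_zero)
  have hconj : conj z = z⁻¹ := by
    rw [← mul_eq_one_iff_eq_inv₀ hz0, conj_mul', hz]; norm_num
  have hconj_sub : conj (1 - w * z) = (z - conj w) / z := by
    rw [map_sub, map_one, map_mul, hconj]; field_simp
  push_cast
  rw [show (‖1 - w * z‖ : ℂ) ^ 4 = ((‖1 - w * z‖ : ℂ) ^ 2) ^ 2 by ring, ← mul_conj',
    hconj_sub, mul_div_assoc', div_pow, mul_pow, inv_div]

theorem integral_inv_norm_one_sub_mul_exp_pow_four {w : ℂ} (hw : ‖w‖ < 1) :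
    ∫ τ in (0 : ℝ)..2 * π, (‖1 - w * exp (I * τ)‖ ^ 4)⁻¹ =
      2 * π * (1 + ‖w‖ ^ 2) / (1 - ‖w‖ ^ 2) ^ 3 := by
  have hcircle := circleIntegral_div_sq_mul_sq (b := conj w) (by rwa [norm_conj]) hw
  rw [conj_mul'] at hcircle
  apply ofReal_injective
  calc ((∫ τ in (0 : ℝ)..2 * π, (‖1 - w * exp (I * τ)‖ ^ 4)⁻¹ : ℝ) : ℂ)
      = ∫ τ in (0 : ℝ)..2 * π, I⁻¹ * (deriv (circleMap 0 1) τ •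
          (fun z => z / ((1 - w * z) ^ 2 * (z - conj w) ^ 2)) (circleMap 0 1 τ)) := by
        rw [← intervalIntegral.integral_ofReal]
        refine integral_congr fun τ _ => ?_
        simp only [deriv_circleMap, circleMap_zero, ofReal_one, one_mul, smul_eq_mul]
        rw [mul_comm I (τ : ℂ), inv_norm_one_sub_mul_pow_four (norm_exp_ofReal_mul_I τ)]
        have := exp_ne_zero (τ * I)
        field_simp
    _ = I⁻¹ * (2 * π * I * (1 + ‖w‖ ^ 2) / (1 - ‖w‖ ^ 2) ^ 3) := by
        rw [intervalIntegral.integral_const_mul, ← hcircle]; rfl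
    _ = _ := by push_cast; field_simp

theorem integral_radial_profile {s t : ℝ} (hs : s < 1) (ht : t ∈ Icc (-1) 1) :
    ∫ r in t..1, r * (1 - s) ^ 2 * (2 * π * (1 + r ^ 2 * s) / (1 - r ^ 2 * s) ^ 3) =
      π * (1 - t ^ 2) * (1 - s ^ 2 * t ^ 2) / (1 - s * t ^ 2) ^ 2 := by
  have hpos : ∀ r ∈ [[t, 1]], 0 < 1 - r ^ 2 * s := by
    intro r hr
    rw [uIcc_of_le ht.2] at hr
    have : r ^ 2 ≤ 1 := by nlinarith [hr.1, hr.2, ht.1]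
    rcases le_or_gt 0 s with h | h <;> nlinarith [sq_nonneg r]
  have hderiv : ∀ r ∈ [[t, 1]],
      HasDerivAt (fun r => π * (1 - s) ^ 2 * r ^ 2 / (1 - r ^ 2 * s) ^ 2)
        (r * (1 - s) ^ 2 * (2 * π * (1 + r ^ 2 * s) / (1 - r ^ 2 * s) ^ 3)) r := by
    intro r hr
    have hne := (hpos r hr).ne'
    have : HasDerivAt (fun r => π * (1 - s) ^ 2 * r ^ 2 / (1 - r ^ 2 * s) ^ 2) _ r :=
      ((hasDerivAt_pow 2 r).const_mul (π * (1 - s) ^ 2)).div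
        ((((hasDerivAt_pow 2 r).mul_const s).const_sub 1).pow 2) (pow_ne_zero 2 hne)
    convert this using 1
    field_simp
    ring
  have hcont : ContinuousOn
      (fun r => r * (1 - s) ^ 2 * (2 * π * (1 + r ^ 2 * s) / (1 - r ^ 2 * s) ^ 3)) [[t, 1]] := by
    intro r hr
    have := (hpos r hr).ne'
    fun_prop (disch := simp [this])
  rw [integral_eq_sub_of_hasDerivAt hderiv hcont.intervalIntegrable]
  have h1 : 1 - s ≠ 0 := by linarith
  have ht' : 1 - s * t ^ 2 ≠ 0 := by rw [mul_comm]; exact (hpos t left_mem_uIcc).ne'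
  field_simp
  ring

theorem polar_integral_formula (a : ℂ) (ha : ‖a‖ < 1) (t : ℝ) (ht : t ∈ Set.Icc (0:ℝ) 1) :
    (∫ τ in (0:ℝ)..(2 * Real.pi), ∫ r in t..1,
        r * (1 - ‖a‖ ^ 2) ^ 2 / ‖1 - (r * Complex.exp (Complex.I * τ)) * conj a‖ ^ 4) =
      Real.pi * (1 - t ^ 2) * (1 - ‖a‖ ^ 4 * t ^ 2) / (1 - ‖a‖ ^ 2 * t ^ 2) ^ 2 := by
  have hw : ∀ r ∈ [[t, 1]], ‖(r : ℂ) * conj a‖ < 1 := by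
    intro r hr
    rw [uIcc_of_le ht.2] at hr
    rw [norm_mul, norm_real, norm_conj, Real.norm_of_nonneg (ht.1.trans hr.1)]
    nlinarith [norm_nonneg a, hr.2]
  rw [intervalIntegral_integral_swap_of_continuousOn]
  · calc _ = ∫ r in t..1, r * (1 - ‖a‖ ^ 2) ^ 2 *
          (2 * π * (1 + r ^ 2 * ‖a‖ ^ 2) / (1 - r ^ 2 * ‖a‖ ^ 2) ^ 3) := by
          refine integral_congr fun r hr => ?_
          simp only [div_eq_mul_inv, mul_right_comm _ (cexp _) (conj a)]
          rw [intervalIntegral.integral_const_mul, ← div_eq_mul_inv,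
            integral_inv_norm_one_sub_mul_exp_pow_four (hw r hr), norm_mul, norm_real,
            norm_conj, mul_pow, Real.norm_eq_abs, sq_abs]
      _ = _ := by
          rw [integral_radial_profile (by nlinarith [norm_nonneg a]) ⟨by linarith [ht.1], ht.2⟩,
            ← pow_mul]
  · rintro ⟨τ, r⟩ ⟨-, hr⟩
    have hne : ‖1 - (r : ℂ) * cexp (I * τ) * conj a‖ ^ 4 ≠ 0 := by
      rw [mul_right_comm]
      refine pow_ne_zero 4 (norm_ne_zero_iff.2 (one_sub_ne_zero_of_norm_lt_one ?_))
      rw [norm_mul, mul_comm I, norm_exp_ofReal_mul_I, mul_one]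
      exact hw r hr
    fun_prop (disch := exact hne)
end

section
/- Let μ : [0,1] → [0,π] be a continuous function with μ(1)=0, differentiable almost everywhere, satisfying the differential inequality 2(π−μ(t)) ≤ −t·μ'(t)·c for almost every t ∈ (0,1), where c > 0, and assume μ is nonincreasing. Then μ(t) ≥ π(1−t^{2/c}) for all t ∈ (0,1]. -/
/-!
Put `g = π - μ` and `r = 2 / c`, so that `g` is nondecreasing and `g' ≥ r g / s` almost
everywhere. A monotone function need not be the integral of its derivative, but its singular
part only helps: `g y - g t ≥ ∫ₜʸ g' ≥ ∫ₜʸ r g(s) / s ds`. The right-hand side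
`F y = g t + ∫ₜʸ r g(s) / s ds` is differentiable with `F' = r g / y ≥ r F / y`, so
`F y * y ^ (-r)` is nondecreasing, whence `g t * t ^ (-r) ≤ F 1 ≤ g 1 = π`.
-/

open MeasureTheory Set

theorem MonotoneOn.intervalIntegral_le_sub_of_ae_le_deriv {f h : ℝ → ℝ} {a b : ℝ} (hab : a ≤ b)
    (hf : MonotoneOn f (Icc a b)) (hh : IntervalIntegrable h volume a b)
    (hle : ∀ᵐ x ∂volume.restrict (Ioo a b), h x ≤ deriv f x) :
    ∫ x in a..b, h x ≤ f b - f a := by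
  have hfab : f a ≤ f b := hf (left_mem_Icc.2 hab) (right_mem_Icc.2 hab) hab
  rw [← uIcc_of_le hab] at hf
  calc ∫ x in a..b, h x ≤ ∫ x in a..b, deriv f x :=
        intervalIntegral.integral_mono_ae_restrict hab hh hf.intervalIntegrable_deriv
          (by rwa [← restrict_Ioo_eq_restrict_Icc])
    _ ≤ f b - f a := by simpa [hfab] using hf.intervalIntegral_deriv_mem_uIcc.2

theorem monotoneOn_mul_rpow_neg_of_hasDerivAt {F F' : ℝ → ℝ} {r a b : ℝ} (ha : 0 < a)
    (hF : ContinuousOn F (Icc a b)) (hF' : ∀ y ∈ Ioo a b, HasDerivAt F (F' y) y)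
    (hle : ∀ y ∈ Ioo a b, r * F y / y ≤ F' y) :
    MonotoneOn (fun y => F y * y ^ (-r)) (Icc a b) := by
  have hψ' : ∀ y ∈ Ioo a b,
      HasDerivAt (fun y => F y * y ^ (-r)) (F' y * y ^ (-r) + F y * (-r * y ^ (-r - 1))) y :=
    fun y hy => (hF' y hy).mul (Real.hasDerivAt_rpow_const (Or.inl (ha.trans hy.1).ne'))
  have hψ'_nonneg : ∀ y ∈ Ioo a b, 0 ≤ F' y * y ^ (-r) + F y * (-r * y ^ (-r - 1)) := by
    intro y hy
    have hy0 : 0 < y := ha.trans hy.1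
    calc 0 ≤ (F' y - r * F y / y) * y ^ (-r) :=
          mul_nonneg (sub_nonneg.2 (hle y hy)) (Real.rpow_nonneg hy0.le _)
      _ = _ := by rw [Real.rpow_sub_one hy0.ne']; ring
  refine monotoneOn_of_deriv_nonneg (convex_Icc a b)
    (hF.mul (continuousOn_id.rpow_const fun y hy => Or.inl (ha.trans_le hy.1).ne')) ?_ ?_ <;>
    rw [interior_Icc]
  · exact fun y hy => (hψ' y hy).differentiableAt.differentiableWithinAt
  · exact fun y hy => (hψ' y hy).deriv ▸ hψ'_nonneg y hy

theorem mul_rpow_neg_le_of_le_add_integral {g : ℝ → ℝ} {r a b : ℝ} (hr : 0 ≤ r) (ha : 0 < a)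
    (hab : a ≤ b) (hg : ContinuousOn g (Icc a b))
    (hle : ∀ y ∈ Icc a b, g a + ∫ s in a..y, r * g s / s ≤ g y) :
    g a * a ^ (-r) ≤ g b * b ^ (-r) := by
  set F : ℝ → ℝ := fun y => g a + ∫ s in a..y, r * g s / s
  have hk : ContinuousOn (fun s => r * g s / s) (Icc a b) :=
    (continuousOn_const.mul hg).div continuousOn_id fun s hs => (ha.trans_le hs.1).ne'
  have hF : ContinuousOn F (Icc a b) := by
    have := intervalIntegral.continuousOn_primitive_interval'
      (hk.intervalIntegrable_of_Icc (μ := volume) hab) left_mem_uIcc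
    rw [uIcc_of_le hab] at this
    exact continuousOn_const.add this
  have hF' : ∀ y ∈ Ioo a b, HasDerivAt F (r * g y / y) y := fun y hy =>
    (intervalIntegral.integral_hasDerivAt_right
      ((hk.mono (Icc_subset_Icc le_rfl hy.2.le)).intervalIntegrable_of_Icc hy.1.le)
      (hk.mono Ioo_subset_Icc_self |>.stronglyMeasurableAtFilter isOpen_Ioo y hy)
      (hk.continuousAt (Icc_mem_nhds hy.1 hy.2))).const_add (g a)
  have hFg : ∀ y ∈ Ioo a b, r * F y / y ≤ r * g y / y := fun y hy =>
    div_le_div_of_nonneg_right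
      (mul_le_mul_of_nonneg_left (hle y (Ioo_subset_Icc_self hy)) hr) (ha.trans hy.1).le
  have hmono := monotoneOn_mul_rpow_neg_of_hasDerivAt ha hF hF' hFg
  calc g a * a ^ (-r) = F a * a ^ (-r) := by simp [F]
    _ ≤ F b * b ^ (-r) := hmono (left_mem_Icc.2 hab) (right_mem_Icc.2 hab) hab
    _ ≤ g b * b ^ (-r) := mul_le_mul_of_nonneg_right (hle b (right_mem_Icc.2 hab))
        (Real.rpow_nonneg (ha.le.trans hab) _)

theorem MonotoneOn.mul_rpow_neg_le_of_ae_le_deriv {g : ℝ → ℝ} {r a b : ℝ} (hr : 0 ≤ r)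
    (ha : 0 < a) (hab : a ≤ b) (hg : MonotoneOn g (Icc a b)) (hgc : ContinuousOn g (Icc a b))
    (hderiv : ∀ᵐ s ∂volume.restrict (Ioo a b), r * g s / s ≤ deriv g s) :
    g a * a ^ (-r) ≤ g b * b ^ (-r) := by
  refine mul_rpow_neg_le_of_le_add_integral hr ha hab hgc fun y hy => ?_
  have hsub : Icc a y ⊆ Icc a b := Icc_subset_Icc le_rfl hy.2
  have := (hg.mono hsub).intervalIntegral_le_sub_of_ae_le_deriv (h := fun s => r * g s / s) hy.1
    (((continuousOn_const.mul (hgc.mono hsub)).div continuousOn_id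
      fun s hs => (ha.trans_le hs.1).ne').intervalIntegrable_of_Icc hy.1)
    (ae_restrict_of_ae_restrict_of_subset (Ioo_subset_Ioo le_rfl hy.2) hderiv)
  linarith

theorem distribution_ode_estimate_general (μ μ' : ℝ → ℝ) (c : ℝ) (hc : 0 < c)
    (hcont : ContinuousOn μ (Set.Icc 0 1))
    (h1 : μ 1 = 0) (hmono : AntitoneOn μ (Set.Icc 0 1))
    (hderiv : ∀ᵐ t ∂(volume.restrict (Set.Ioo (0:ℝ) 1)), HasDerivAt μ (μ' t) t)
    (hineq : ∀ᵐ t ∂(volume.restrict (Set.Ioo (0:ℝ) 1)),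
      2 * (Real.pi - μ t) ≤ -t * μ' t * c) :
    ∀ t ∈ Set.Ioc (0:ℝ) 1, Real.pi * (1 - t ^ (2 / c)) ≤ μ t := by
  intro t ⟨ht0, ht1⟩
  set g : ℝ → ℝ := fun s => Real.pi - μ s
  have hg_mono : MonotoneOn g (Icc 0 1) := fun x hx y hy hxy => sub_le_sub_left (hmono hx hy hxy) _
  have hg_deriv : ∀ᵐ s ∂volume.restrict (Ioo 0 1), 2 / c * g s / s ≤ deriv g s := by
    filter_upwards [hderiv, hineq, ae_restrict_mem measurableSet_Ioo] with s hμ' hs hs01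
    rw [(hμ'.const_sub Real.pi).deriv, div_mul_eq_mul_div, div_div,
      div_le_iff₀ (mul_pos hc hs01.1)]
    linarith
  have hsub : Icc t 1 ⊆ Icc 0 1 := Icc_subset_Icc ht0.le le_rfl
  have key := (hg_mono.mono hsub).mul_rpow_neg_le_of_ae_le_deriv (by positivity) ht0 ht1
    ((continuousOn_const.sub hcont).mono hsub)
    (ae_restrict_of_ae_restrict_of_subset (Ioo_subset_Ioo ht0.le le_rfl) hg_deriv)
  simp only [g, h1, Real.one_rpow, sub_zero, mul_one, Real.rpow_neg ht0.le] at key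
  rw [mul_inv_le_iff₀ (Real.rpow_pos_of_pos ht0 (2 / c))] at key
  linarith

theorem distribution_ode_estimate (μ μ' : ℝ → ℝ) (c : ℝ) (hc : 0 < c)
    (hcont : ContinuousOn μ (Set.Icc 0 1))
    (hmap : ∀ t ∈ Set.Icc (0:ℝ) 1, μ t ∈ Set.Icc 0 Real.pi)
    (h1 : μ 1 = 0) (hmono : AntitoneOn μ (Set.Icc 0 1))
    (hderiv : ∀ᵐ t ∂(volume.restrict (Set.Ioo (0:ℝ) 1)), HasDerivAt μ (μ' t) t)
    (hineq : ∀ᵐ t ∂(volume.restrict (Set.Ioo (0:ℝ) 1)),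
      2 * (Real.pi - μ t) ≤ -t * μ' t * c) :
    ∀ t ∈ Set.Ioc (0:ℝ) 1, Real.pi * (1 - t ^ (2 / c)) ≤ μ t :=
  distribution_ode_estimate_general μ μ' c hc hcont h1 hmono hderiv hineq
end

section
/- For the degree-1 Blaschke product and p = 2: h(a) := ‖(z+a)/(1+z·conj(a))‖_{L²(𝔻)} satisfies h(a)² = π·(2|a|⁴−|a|²−(1−|a|²)²·log(1−|a|²))/|a|⁴ for 0<|a|<1, and h attains its minimum √(π/2) exactly at a = 0. -/
/-!
The identity `|1 + z ā|² - |z + a|² = (1 - |z|²)(1 - |a|²)` gives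
`|(z + a) / (1 + z ā)|² = 1 - (1 - |z|²)(1 - |a|²) / |1 + z ā|²`.
In polar coordinates `z = r e^{iθ}` the angular integral of `|1 + w e^{iθ}|⁻²` is
`2π / (1 - |w|²)`: on the unit circle it equals `e^{iθ} / ((e^{iθ} + w̄)(1 + w e^{iθ}))`, so it is a
contour integral which Cauchy's formula evaluates at `-w̄`. What remains is an elementary radial
integral with a logarithmic primitive. The minimum at `a = 0` follows from
`log (1 - t) ≤ -t - t² / 2`.
-/

open MeasureTheory Complex ComplexConjugate Set
open scoped Real

theorem one_add_ne_zero_of_norm_lt_one {R : Type*} [NormedRing R] [NormOneClass R] {u : R}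
    (hu : ‖u‖ < 1) : 1 + u ≠ 0 := by
  intro h
  rw [eq_neg_of_add_eq_zero_right h, norm_neg, norm_one] at hu
  exact lt_irrefl _ hu

theorem one_add_mul_exp_ne_zero {w : ℂ} (hw : ‖w‖ < 1) (θ : ℝ) : 1 + w * exp (θ * I) ≠ 0 :=
  one_add_ne_zero_of_norm_lt_one (by rwa [norm_mul, norm_exp_ofReal_mul_I, mul_one])

theorem Complex.normSq_one_add_mul_conj_sub_normSq_add (z a : ℂ) :
    normSq (1 + z * conj a) - normSq (z + a) = (1 - normSq z) * (1 - normSq a) := by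
  simp only [normSq_apply, add_re, add_im, mul_re, mul_im, one_re, one_im, conj_re, conj_im]
  ring

theorem norm_div_one_add_mul_conj_sq {z a : ℂ} (h : 1 + z * conj a ≠ 0) :
    ‖(z + a) / (1 + z * conj a)‖ ^ 2
      = 1 - (1 - ‖z‖ ^ 2) * (1 - ‖a‖ ^ 2) / normSq (1 + z * conj a) := by
  have hpos : normSq (1 + z * conj a) ≠ 0 := normSq_eq_zero.not.mpr h
  rw [norm_div, div_pow, Complex.sq_norm, Complex.sq_norm, Complex.sq_norm, Complex.sq_norm,
    eq_sub_iff_add_eq, ← add_div, div_eq_one_iff_eq hpos]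
  linear_combination -normSq_one_add_mul_conj_sub_normSq_add z a

theorem inv_normSq_one_add_mul_of_norm_eq_one {w e : ℂ} (he : ‖e‖ = 1) (h : 1 + w * e ≠ 0) :
    ((normSq (1 + w * e))⁻¹ : ℂ) = e * ((e + conj w)⁻¹ * (1 + w * e)⁻¹) := by
  have he0 : e ≠ 0 := norm_ne_zero_iff.mp (by rw [he]; exact one_ne_zero)
  have hconj : e * conj e = 1 := by rw [mul_conj, ← Complex.sq_norm, he]; simp
  have hsum : e + conj w = e * conj (1 + w * e) := by
    simp only [map_add, map_one, map_mul]
    linear_combination (-conj w) * hconj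
  have hconj_ne : conj (1 + w * e) ≠ 0 := (map_ne_zero _).mpr h
  rw [← mul_conj, hsum]
  field_simp

theorem circleIntegral_inv_add_conj_mul_inv_one_add_mul {w : ℂ} (hw : ‖w‖ < 1) :
    (∮ z in C(0, 1), (z + conj w)⁻¹ * (1 + w * z)⁻¹) = 2 * π * I / (1 - normSq w) := by
  have hdiff : DiffContOnCl ℂ (fun z => (1 + w * z)⁻¹) (Metric.ball 0 1) := by
    refine DifferentiableOn.diffContOnCl fun z hz => ?_
    rw [closure_ball _ one_ne_zero, mem_closedBall_zero_iff] at hz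
    refine (((differentiableAt_const _).add (differentiableAt_id.const_mul w)).inv
      (one_add_ne_zero_of_norm_lt_one ?_)).differentiableWithinAt
    rw [norm_mul]
    nlinarith [norm_nonneg w, norm_nonneg z]
  have hcauchy := hdiff.circleIntegral_sub_inv_smul (w := -conj w) (by simpa using hw)
  simp only [sub_neg_eq_add, smul_eq_mul] at hcauchy
  rw [hcauchy, mul_neg, ← sub_eq_add_neg, mul_conj, div_eq_mul_inv]

theorem integral_inv_normSq_one_add_mul_exp {w : ℂ} (hw : ‖w‖ < 1) :
    ∫ θ in (-π)..π, (normSq (1 + w * exp (θ * I)))⁻¹ = 2 * π / (1 - normSq w) := by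
  have hper : Function.Periodic (fun θ : ℝ => (normSq (1 + w * exp (θ * I)))⁻¹) (2 * π) := by
    intro θ
    simp only [ofReal_add, ofReal_mul, ofReal_ofNat, add_mul, Complex.exp_add, exp_two_pi_mul_I,
      mul_one]
  have hshift := hper.intervalIntegral_add_eq (-π) 0
  rw [show -π + 2 * π = π by ring, zero_add] at hshift
  have hcircle : ∀ θ : ℝ, ((normSq (1 + w * exp (θ * I)))⁻¹ : ℂ) = I⁻¹ *
      (deriv (circleMap 0 1) θ • ((circleMap 0 1 θ + conj w)⁻¹ * (1 + w * circleMap 0 1 θ)⁻¹)) := by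
    intro θ
    rw [inv_normSq_one_add_mul_of_norm_eq_one (norm_exp_ofReal_mul_I θ)
      (one_add_mul_exp_ne_zero hw θ), deriv_circleMap]
    simp only [circleMap, ofReal_one, one_mul, zero_add, smul_eq_mul]
    field_simp
  have hcauchy := circleIntegral_inv_add_conj_mul_inv_one_add_mul hw
  rw [circleIntegral] at hcauchy
  rw [hshift]
  apply ofReal_injective
  rw [← intervalIntegral.integral_ofReal]
  push_cast
  simp only [hcircle, intervalIntegral.integral_const_mul, hcauchy]
  field_simp

theorem integral_norm_lt_eq_integral_polar {E : Type*} [NormedAddCommGroup E] [NormedSpace ℝ E]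
    {f : ℂ → E} {R : ℝ} (hR : 0 ≤ R) (hf : ContinuousOn f (Metric.closedBall 0 R)) :
    ∫ z in {z : ℂ | ‖z‖ < R}, f z = ∫ r in 0..R, ∫ θ in (-π)..π, r • f (r * exp (θ * I)) := by
  set polar : ℝ × ℝ → ℂ := fun p => p.1 * exp (p.2 * I)
  have hsymm : ∀ p, Complex.polarCoord.symm p = polar p := fun p => by
    rw [Complex.polarCoord_symm_apply, ofReal_cos, ofReal_sin, ← exp_mul_I]
  have hnorm : ∀ p : ℝ × ℝ, ‖polar p‖ = |p.1| := fun p => by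
    rw [← hsymm, Complex.norm_polarCoord_symm]
  set S := {z : ℂ | ‖z‖ < R}
  have hS : MeasurableSet S := measurableSet_lt measurable_norm measurable_const
  have hind : ∀ p : ℝ × ℝ, p.1 • S.indicator f (polar p)
      = (polar ⁻¹' S).indicator (fun p => p.1 • f (polar p)) p := fun p => by
    by_cases hp : polar p ∈ S
    · rw [indicator_of_mem hp, indicator_of_mem (mem_preimage.mpr hp)]
    · rw [indicator_of_notMem hp, indicator_of_notMem (mt mem_preimage.mp hp), smul_zero]
  have hdomain : polarCoord.target ∩ polar ⁻¹' S = Ioo 0 R ×ˢ Ioo (-π) π := by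
    ext p
    simp only [polarCoord_target, mem_inter_iff, mem_prod, mem_Ioi, mem_preimage, S,
      mem_ofPred_eq, hnorm, mem_Ioo]
    constructor
    · rintro ⟨⟨hr, hθ⟩, hrR⟩
      exact ⟨⟨hr, abs_of_pos hr ▸ hrR⟩, hθ⟩
    · rintro ⟨⟨hr, hrR⟩, hθ⟩
      exact ⟨⟨hr, hθ⟩, (abs_of_pos hr).symm ▸ hrR⟩
  have hint : IntegrableOn (fun p : ℝ × ℝ => p.1 • f (polar p)) (Icc 0 R ×ˢ Icc (-π) π) := by
    refine ContinuousOn.integrableOn_compact (isCompact_Icc.prod isCompact_Icc) ?_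
    refine continuousOn_fst.smul (hf.comp (by fun_prop) fun p hp => ?_)
    rw [mem_closedBall_zero_iff, hnorm, abs_of_nonneg hp.1.1]
    exact hp.1.2
  rw [← integral_indicator hS, ← Complex.integral_comp_polarCoord_symm]
  simp_rw [hsymm, hind]
  rw [setIntegral_indicator (hS.preimage (by fun_prop)), hdomain, Measure.volume_eq_prod,
    setIntegral_prod _ (hint.mono_set (prod_mono Ioo_subset_Icc_self Ioo_subset_Icc_self)),
    intervalIntegral.integral_of_le hR, integral_Ioc_eq_integral_Ioo]
  refine setIntegral_congr_fun measurableSet_Ioo fun r _ => ?_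
  rw [intervalIntegral.integral_of_le (by linarith [Real.pi_pos]), integral_Ioc_eq_integral_Ioo]

theorem integral_norm_moebius_sq_circle {a : ℂ} {r : ℝ} (hra : |r| * ‖a‖ < 1) :
    ∫ θ in (-π)..π, ‖(r * exp (θ * I) + a) / (1 + r * exp (θ * I) * conj a)‖ ^ 2
      = 2 * π - 2 * π * (1 - r ^ 2) * (1 - ‖a‖ ^ 2) / (1 - r ^ 2 * ‖a‖ ^ 2) := by
  set w : ℂ := r * conj a
  have hw : ‖w‖ < 1 := by rwa [norm_mul, norm_real, Real.norm_eq_abs, RCLike.norm_conj]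
  have hnormSq : normSq w = r ^ 2 * ‖a‖ ^ 2 := by
    rw [← Complex.sq_norm, norm_mul, norm_real, Real.norm_eq_abs, RCLike.norm_conj, mul_pow, sq_abs]
  have hnormSq_lt : normSq w < 1 := by
    rw [← Complex.sq_norm]
    exact pow_lt_one₀ (norm_nonneg _) hw two_ne_zero
  have hpt : ∀ θ : ℝ, ‖(r * exp (θ * I) + a) / (1 + r * exp (θ * I) * conj a)‖ ^ 2
      = 1 - (1 - r ^ 2) * (1 - ‖a‖ ^ 2) * (normSq (1 + w * exp (θ * I)))⁻¹ := fun θ => by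
    have hden : 1 + r * exp (θ * I) * conj a = 1 + w * exp (θ * I) := by ring
    have hz : ‖(r : ℂ) * exp (θ * I)‖ ^ 2 = r ^ 2 := by
      rw [norm_mul, norm_exp_ofReal_mul_I, mul_one, norm_real, Real.norm_eq_abs, sq_abs]
    rw [norm_div_one_add_mul_conj_sq (hden ▸ one_add_mul_exp_ne_zero hw θ), hz, hden,
      div_eq_mul_inv]
  have hcont : Continuous fun θ : ℝ => (normSq (1 + w * exp (θ * I)))⁻¹ :=
    Continuous.inv₀ (by fun_prop) fun θ => normSq_eq_zero.not.mpr (one_add_mul_exp_ne_zero hw θ)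
  simp_rw [hpt]
  rw [intervalIntegral.integral_sub intervalIntegrable_const
      ((hcont.intervalIntegrable _ _).const_mul _), intervalIntegral.integral_const,
    intervalIntegral.integral_const_mul, integral_inv_normSq_one_add_mul_exp hw, hnormSq]
  have hden : 1 - r ^ 2 * ‖a‖ ^ 2 ≠ 0 := by linarith
  field_simp
  ring

theorem integral_unitDisc_norm_moebius_sq_eq_radial {a : ℂ} (ha : ‖a‖ < 1) :
    ∫ z in {z : ℂ | ‖z‖ < 1}, ‖(z + a) / (1 + z * conj a)‖ ^ 2
      = ∫ r in (0 : ℝ)..1,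
          r * (2 * π - 2 * π * (1 - r ^ 2) * (1 - ‖a‖ ^ 2) / (1 - r ^ 2 * ‖a‖ ^ 2)) := by
  have hsmall : ∀ {s : ℝ}, s ≤ 1 → s * ‖a‖ < 1 := fun hs1 =>
    lt_of_le_of_lt (mul_le_of_le_one_left (norm_nonneg a) hs1) ha
  have hden : ∀ z ∈ Metric.closedBall (0 : ℂ) 1, 1 + z * conj a ≠ 0 := fun z hz => by
    refine one_add_ne_zero_of_norm_lt_one ?_
    rw [norm_mul, RCLike.norm_conj]
    exact hsmall (mem_closedBall_zero_iff.mp hz)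
  have hcont : ContinuousOn (fun z : ℂ => ‖(z + a) / (1 + z * conj a)‖ ^ 2)
      (Metric.closedBall 0 1) :=
    ((continuousOn_id.add continuousOn_const).div (by fun_prop) hden).norm.pow 2
  rw [integral_norm_lt_eq_integral_polar zero_le_one hcont]
  refine intervalIntegral.integral_congr fun r hr => ?_
  rw [uIcc_of_le zero_le_one] at hr
  simp only [smul_eq_mul, intervalIntegral.integral_const_mul]
  rw [integral_norm_moebius_sq_circle (by rw [abs_of_nonneg hr.1]; exact hsmall hr.2)]

theorem integral_radial_moebius {t : ℝ} (ht0 : 0 < t) (ht1 : t < 1) :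
    ∫ r in (0 : ℝ)..1, r * (2 * π - 2 * π * (1 - r ^ 2) * (1 - t) / (1 - r ^ 2 * t))
      = π * (2 * t ^ 2 - t - (1 - t) ^ 2 * Real.log (1 - t)) / t ^ 2 := by
  have hpos : ∀ r ∈ uIcc (0 : ℝ) 1, 0 < 1 - r ^ 2 * t := fun r hr => by
    rw [uIcc_of_le zero_le_one] at hr
    nlinarith [pow_le_one₀ (n := 2) hr.1 hr.2]
  -- `r (1 - r²) / (1 - t r²)` has primitive `(r² + (1 - t) / t · log (1 - t r²)) / (2 t)`
  have hderiv : ∀ r ∈ uIcc (0 : ℝ) 1, HasDerivAt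
      (fun r => π * r ^ 2 - π * (1 - t) / t * (r ^ 2 + (1 - t) / t * Real.log (1 - r ^ 2 * t)))
      (r * (2 * π - 2 * π * (1 - r ^ 2) * (1 - t) / (1 - r ^ 2 * t))) r := fun r hr => by
    have hlog := (((hasDerivAt_pow 2 r).mul_const t).const_sub 1).log (hpos r hr).ne'
    refine (((hasDerivAt_pow 2 r).const_mul π).sub
      (((hasDerivAt_pow 2 r).add (hlog.const_mul ((1 - t) / t))).const_mul
        (π * (1 - t) / t))).congr_deriv ?_
    have hden := (hpos r hr).ne'
    norm_num
    field_simp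
    ring
  have hcont : ContinuousOn
      (fun r => r * (2 * π - 2 * π * (1 - r ^ 2) * (1 - t) / (1 - r ^ 2 * t))) (uIcc 0 1) := by
    fun_prop (disch := exact fun r hr => (hpos r hr).ne')
  rw [intervalIntegral.integral_eq_sub_of_hasDerivAt hderiv hcont.intervalIntegrable]
  norm_num
  field_simp
  ring

theorem Real.log_one_sub_le_neg_sub_sq_div_two {t : ℝ} (ht0 : 0 ≤ t) (ht1 : t < 1) :
    Real.log (1 - t) ≤ -t - t ^ 2 / 2 := by
  have h := sum_le_hasSum (Finset.range 2) (fun n _ => by positivity)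
    (Real.hasSum_pow_div_log_of_abs_lt_one (by rwa [abs_of_nonneg ht0]))
  norm_num [Finset.sum_range_succ] at h
  linarith

theorem pi_div_two_lt_radial_moebius {t : ℝ} (ht0 : 0 < t) (ht1 : t < 1) :
    π / 2 < π * (2 * t ^ 2 - t - (1 - t) ^ 2 * Real.log (1 - t)) / t ^ 2 := by
  have hlog := Real.log_one_sub_le_neg_sub_sq_div_two ht0.le ht1
  rw [lt_div_iff₀ (by positivity), div_mul_eq_mul_div, div_lt_iff₀ two_pos, mul_assoc]
  refine mul_lt_mul_of_pos_left ?_ Real.pi_pos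
  nlinarith [mul_le_mul_of_nonneg_left hlog (sq_nonneg (1 - t)), pow_pos ht0 4]

theorem moebius_L2_norm (a : ℂ) (ha : ‖a‖ < 1) :
    (a ≠ 0 →
      (∫ z in {z : ℂ | ‖z‖ < 1}, ‖(z + a) / (1 + z * conj a)‖ ^ 2) =
        Real.pi * (2 * ‖a‖ ^ 4 - ‖a‖ ^ 2 -
          (1 - ‖a‖ ^ 2) ^ 2 * Real.log (1 - ‖a‖ ^ 2)) / ‖a‖ ^ 4) ∧
    ((∫ z in {z : ℂ | ‖z‖ < 1}, ‖z‖ ^ 2) = Real.pi / 2) ∧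
    (Real.pi / 2 ≤ ∫ z in {z : ℂ | ‖z‖ < 1}, ‖(z + a) / (1 + z * conj a)‖ ^ 2) ∧
    (a ≠ 0 →
      Real.pi / 2 < ∫ z in {z : ℂ | ‖z‖ < 1}, ‖(z + a) / (1 + z * conj a)‖ ^ 2) := by
  have ht1 : ‖a‖ ^ 2 < 1 := pow_lt_one₀ (norm_nonneg a) ha two_ne_zero
  have hformula : a ≠ 0 → ∫ z in {z : ℂ | ‖z‖ < 1}, ‖(z + a) / (1 + z * conj a)‖ ^ 2
      = π * (2 * (‖a‖ ^ 2) ^ 2 - ‖a‖ ^ 2 - (1 - ‖a‖ ^ 2) ^ 2 * Real.log (1 - ‖a‖ ^ 2))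
        / (‖a‖ ^ 2) ^ 2 := fun ha0 => by
    rw [integral_unitDisc_norm_moebius_sq_eq_radial ha, integral_radial_moebius (by positivity) ht1]
  have hstrict : a ≠ 0 → π / 2 < ∫ z in {z : ℂ | ‖z‖ < 1}, ‖(z + a) / (1 + z * conj a)‖ ^ 2 :=
    fun ha0 => hformula ha0 ▸ pi_div_two_lt_radial_moebius (by positivity) ht1
  have hcenter : ∫ z in {z : ℂ | ‖z‖ < 1}, ‖z‖ ^ 2 = π / 2 := by
    have h := integral_unitDisc_norm_moebius_sq_eq_radial (a := 0) (by simp)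
    simp only [add_zero, map_zero, mul_zero, div_one, norm_zero] at h
    have hcubic : ∀ r : ℝ, r * (2 * π - 2 * π * (1 - r ^ 2) * (1 - 0 ^ 2) / (1 - r ^ 2 * 0 ^ 2))
        = 2 * π * r ^ 3 := fun r => by ring
    simp_rw [h, hcubic, intervalIntegral.integral_const_mul, integral_pow]
    ring
  refine ⟨fun ha0 => by rw [hformula ha0]; ring, hcenter, ?_, hstrict⟩
  rcases eq_or_ne a 0 with rfl | ha0
  · simpa using hcenter.ge
  · exact (hstrict ha0).le
end

section
/- Let f be a finite Blaschke product of degree d and p ≥ 1. Then the L^p norm of f over the unit disk satisfies ‖f‖_p^p = ∫_𝔻 |f|^p dA ≥ 2π/(2+dp), with equality if and only if f(z) = e^{iτ}z^d. -/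
open MeasureTheory Complex ComplexConjugate
open Set Metric Filter Real

/-!
In polar coordinates the area integral becomes `2π ∫₀¹ r M(r) dr`, where `M(r)` is the circle
mean of `|f|^p` on `|z| = r`. Each Blaschke factor has logarithmic circle mean
`log max(r, |a_k|)` (the numerator by Jensen's formula, the zero-free denominator being
harmonic), so Jensen's inequality for `exp` gives `M(r) ≥ ∏ max(r, |a_k|)^p ≥ r^{dp}`, strictly
for `r < |a_k|` when some `a_k ≠ 0`. Integrating `2π r^{dp+1}` over `(0, 1)` gives `2π/(2+dp)`.
-/

theorem ConvexOn.map_circleAverage_le {g : ℝ → ℝ} {u : ℂ → ℝ} {c : ℂ} {R : ℝ}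
    (hg : ConvexOn ℝ univ g) (hgc : Continuous g) (hu : CircleIntegrable u c R)
    (hgu : CircleIntegrable (g ∘ u) c R) :
    g (circleAverage u c R) ≤ circleAverage (g ∘ u) c R := by
  have h2π : (0 : ℝ) ≤ 2 * π := by positivity
  simp only [circleAverage_eq_intervalAverage, Function.comp_apply]
  refine hg.map_set_average_le hgc.continuousOn isClosed_univ ?_ ?_
    (ae_of_all _ fun _ => mem_univ _) hu.def' hgu.def' <;>
  simp [uIoc_of_le h2π, pi_pos, ENNReal.mul_eq_top]

theorem two_pi_mul_circleAverage_eq_setIntegral (f : ℂ → ℝ) (c : ℂ) (R : ℝ) :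
    2 * π * circleAverage f c R = ∫ θ in Ioo (-π) π, f (circleMap c R θ) := by
  rw [circleAverage_eq_integral_add (-π), smul_eq_mul, ← mul_assoc,
    mul_inv_cancel₀ (by positivity), one_mul,
    intervalIntegral.integral_comp_add_right (fun θ => f (circleMap c R θ)),
    intervalIntegral.integral_of_le (by linarith [pi_pos]), setIntegral_congr_set Ioo_ae_eq_Ioc]
  ring_nf

theorem integral_ball_eq_integral_circleAverage {f : ℂ → ℝ} {R : ℝ} (hR : 0 ≤ R)
    (hf : ContinuousOn f (closedBall 0 R)) :
    ∫ z in ball (0 : ℂ) R, f z = 2 * π * ∫ r in 0..R, r * circleAverage f 0 r := by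
  have hpolar : ⇑Complex.polarCoord.symm = fun q : ℝ × ℝ => circleMap 0 q.1 q.2 := by
    ext1 q
    simp [circleMap, Complex.exp_mul_I, ← ofReal_cos, ← ofReal_sin]
  have hset : polarCoord.target ∩ (Complex.polarCoord.symm ⁻¹' ball 0 R) =
      Ioo 0 R ×ˢ Ioo (-π) π := by
    ext ⟨r, θ⟩
    simp only [polarCoord_target, mem_inter_iff, mem_prod, mem_Ioi, mem_preimage,
      mem_ball_zero_iff, norm_polarCoord_symm, mem_Ioo]
    constructor
    · rintro ⟨⟨hr, hθ⟩, hrR⟩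
      exact ⟨⟨hr, by rwa [abs_of_pos hr] at hrR⟩, hθ⟩
    · rintro ⟨⟨hr, hrR⟩, hθ⟩
      exact ⟨⟨hr, hθ⟩, by rwa [abs_of_pos hr]⟩
  have hint : IntegrableOn (fun q : ℝ × ℝ => q.1 * f (circleMap 0 q.1 q.2))
      (Ioo 0 R ×ˢ Ioo (-π) π) := by
    refine ContinuousOn.integrableOn_compact (isCompact_Icc.prod isCompact_Icc) ?_
      |>.mono_set (prod_mono Ioo_subset_Icc_self Ioo_subset_Icc_self)
    refine continuousOn_fst.mul (hf.comp (by fun_prop) fun q hq => ?_)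
    simpa [abs_of_nonneg hq.1.1] using hq.1.2
  have hball : MeasurableSet (Complex.polarCoord.symm ⁻¹' ball (0 : ℂ) R) :=
    measurableSet_ball.preimage (by rw [hpolar]; fun_prop)
  have hind : ∀ q : ℝ × ℝ, q.1 • (ball 0 R).indicator f (Complex.polarCoord.symm q) =
      (Complex.polarCoord.symm ⁻¹' ball 0 R).indicator
        (fun q => q.1 * f (circleMap 0 q.1 q.2)) q := by
    intro q
    rw [hpolar]
    by_cases hq : circleMap 0 q.1 q.2 ∈ ball 0 R <;> simp [hq]
  rw [← integral_indicator measurableSet_ball, ← Complex.integral_comp_polarCoord_symm]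
  simp_rw [hind]
  rw [setIntegral_indicator hball, hset, Measure.volume_eq_prod, setIntegral_prod _ hint]
  simp_rw [integral_const_mul, ← two_pi_mul_circleAverage_eq_setIntegral,
    intervalIntegral.integral_of_le hR, ← setIntegral_congr_set Ioo_ae_eq_Ioc,
    ← integral_const_mul]
  congr 1 with r
  ring

theorem two_pi_div_two_add_eq_integral {q : ℝ} (hq : -2 < q) :
    2 * π / (2 + q) = 2 * π * ∫ r in (0 : ℝ)..1, r * r ^ q := by
  have hmul : ∀ᵐ r, r ∈ uIoc (0 : ℝ) 1 → r * r ^ q = r ^ (q + 1) :=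
    ae_of_all _ fun r hr => by
      rw [uIoc_of_le zero_le_one] at hr
      rw [rpow_add hr.1, rpow_one, mul_comm]
  rw [intervalIntegral.integral_congr_ae hmul, integral_rpow (Or.inl (by linarith))]
  simp [show q + 1 + 1 = 2 + q by ring, zero_rpow (show 2 + q ≠ 0 by linarith), div_eq_mul_inv]

theorem integral_ball_norm_pow_rpow (n : ℕ) {p : ℝ} (hp : 0 ≤ p) :
    ∫ z in ball (0 : ℂ) 1, ‖z ^ n‖ ^ p = 2 * π / (2 + n * p) := by
  rw [integral_ball_eq_integral_circleAverage zero_le_one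
      ((continuous_pow n).norm.rpow_const fun _ => Or.inr hp).continuousOn,
    two_pi_div_two_add_eq_integral (by linarith [mul_nonneg (Nat.cast_nonneg n) hp])]
  congr 1
  refine intervalIntegral.integral_congr fun r hr => ?_
  have hr0 : 0 ≤ r := by simpa using hr.1
  rw [circleAverage_const_on_circle fun z hz => by
    rw [norm_pow, mem_sphere_zero_iff_norm.1 hz, abs_of_nonneg hr0, ← rpow_natCast,
      ← rpow_mul hr0]]

noncomputable def blaschkeFactor (a z : ℂ) : ℂ := (z - a) / (1 - z * conj a)

noncomputable def blaschkeProduct {ι : Type*} [Fintype ι] (a : ι → ℂ) (z : ℂ) : ℂ :=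
  ∏ k, blaschkeFactor (a k) z

theorem blaschkeProduct_apply {ι : Type*} [Fintype ι] (a : ι → ℂ) (z : ℂ) :
    blaschkeProduct a z = ∏ k, (z - a k) / (1 - z * conj (a k)) :=
  rfl

theorem blaschkeProduct_zero {ι : Type*} [Fintype ι] (z : ℂ) :
    blaschkeProduct (0 : ι → ℂ) z = z ^ Fintype.card ι := by
  simp [blaschkeProduct, blaschkeFactor]

theorem one_sub_mul_conj_ne_zero {a z : ℂ} (hz : ‖z‖ ≤ 1) (ha : ‖a‖ < 1) :
    1 - z * conj a ≠ 0 := by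
  refine sub_ne_zero.2 fun h => (mul_lt_one_of_nonneg_of_lt_one_right hz (norm_nonneg a) ha).ne ?_
  rw [← RCLike.norm_conj a, ← norm_mul, ← h, norm_one]

theorem blaschkeFactor_ne_zero {a z : ℂ} (hz : ‖z‖ ≤ 1) (ha : ‖a‖ < 1) (hza : z ≠ a) :
    blaschkeFactor a z ≠ 0 :=
  div_ne_zero (sub_ne_zero.2 hza) (one_sub_mul_conj_ne_zero hz ha)

theorem continuousOn_blaschkeFactor {a : ℂ} (ha : ‖a‖ < 1) :
    ContinuousOn (blaschkeFactor a) (closedBall 0 1) :=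
  ContinuousOn.div (by fun_prop) (by fun_prop) fun _ hz =>
    one_sub_mul_conj_ne_zero (mem_closedBall_zero_iff.1 hz) ha

theorem meromorphicOn_blaschkeFactor (a : ℂ) (s : Set ℂ) : MeromorphicOn (blaschkeFactor a) s :=
  fun _ _ => by unfold blaschkeFactor; fun_prop

theorem circleAverage_log_norm_blaschkeFactor {a : ℂ} {r : ℝ} (hr : 0 < r) (hr1 : r ≤ 1)
    (ha : ‖a‖ < 1) :
    circleAverage (fun z => Real.log ‖blaschkeFactor a z‖) 0 r = Real.log (max r ‖a‖) := by
  have hden : ∀ z ∈ closedBall (0 : ℂ) |r|, 1 - z * conj a ≠ 0 := fun z hz =>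
    one_sub_mul_conj_ne_zero ((mem_closedBall_zero_iff.1 hz).trans (by rwa [abs_of_pos hr])) ha
  have hsplit : (fun z => Real.log ‖blaschkeFactor a z‖) =ᶠ[codiscreteWithin (sphere 0 |r|)]
      fun z => Real.log ‖z - a‖ - Real.log ‖1 - z * conj a‖ := by
    filter_upwards [compl_singleton_mem_codiscreteWithin a, self_mem_codiscreteWithin _]
      with z hza hz
    rw [blaschkeFactor, norm_div, Real.log_div (norm_ne_zero_iff.2 (sub_ne_zero.2 hza))
      (norm_ne_zero_iff.2 (hden z (sphere_subset_closedBall hz)))]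
  have hanalytic : AnalyticOnNhd ℂ (fun z => 1 - z * conj a) (closedBall 0 |r|) :=
    analyticOnNhd_const.sub (analyticOnNhd_id.mul analyticOnNhd_const)
  rw [circleAverage_congr_codiscreteWithin hsplit hr.ne',
    circleAverage_fun_sub (circleIntegrable_log_norm_sub_const r)
      (hanalytic.mono sphere_subset_closedBall).meromorphicOn.circleIntegrable_log_norm,
    circleAverage_log_norm_sub_const_eq_log_radius_add_posLog hr.ne',
    hanalytic.circleAverage_log_norm_of_ne_zero hden, posLog_eq_log_max_one (by positivity),
    ← Real.log_mul hr.ne' (by positivity), mul_max_of_nonneg _ _ hr.le]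
  simp [hr.ne']

section BlaschkeProduct

variable {ι : Type*} [Fintype ι] {a : ι → ℂ}

theorem circleAverage_log_norm_blaschkeProduct (ha : ∀ k, ‖a k‖ < 1) {r : ℝ} (hr : 0 < r)
    (hr1 : r ≤ 1) :
    circleAverage (fun z => Real.log ‖blaschkeProduct a z‖) 0 r =
      ∑ k, Real.log (max r ‖a k‖) := by
  have hsplit : (fun z => Real.log ‖blaschkeProduct a z‖) =ᶠ[codiscreteWithin (sphere 0 |r|)]
      fun z => ∑ k, Real.log ‖blaschkeFactor (a k) z‖ := by
    filter_upwards [compl_finite_mem_codiscreteWithin (finite_range a),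
      self_mem_codiscreteWithin _] with z hza hz
    have hz1 : ‖z‖ ≤ 1 := by rw [mem_sphere_zero_iff_norm.1 hz, abs_of_pos hr]; exact hr1
    rw [blaschkeProduct, norm_prod, Real.log_prod fun k _ => norm_ne_zero_iff.2 <|
      blaschkeFactor_ne_zero hz1 (ha k) fun h => hza ⟨k, h.symm⟩]
  rw [circleAverage_congr_codiscreteWithin hsplit hr.ne', circleAverage_fun_sum fun k _ =>
    (meromorphicOn_blaschkeFactor (a k) _).circleIntegrable_log_norm]
  exact Finset.sum_congr rfl fun k _ => circleAverage_log_norm_blaschkeFactor hr hr1 (ha k)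

theorem continuousOn_blaschkeProduct (ha : ∀ k, ‖a k‖ < 1) :
    ContinuousOn (blaschkeProduct a) (closedBall 0 1) :=
  continuousOn_finsetProd _ fun k _ => continuousOn_blaschkeFactor (ha k)

theorem continuousOn_norm_blaschkeProduct_rpow (ha : ∀ k, ‖a k‖ < 1) {p : ℝ} (hp : 0 ≤ p) :
    ContinuousOn (fun z => ‖blaschkeProduct a z‖ ^ p) (closedBall 0 1) :=
  (continuousOn_blaschkeProduct ha).norm.rpow_const fun _ _ => Or.inr hp

theorem prod_max_rpow_le_circleAverage_norm_blaschkeProduct_rpow (ha : ∀ k, ‖a k‖ < 1)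
    {r : ℝ} (hr : 0 < r) (hr1 : r ≤ 1) {p : ℝ} (hp : 0 ≤ p) :
    (∏ k, max r ‖a k‖) ^ p ≤ circleAverage (fun z => ‖blaschkeProduct a z‖ ^ p) 0 r := by
  set u : ℂ → ℝ := fun z => p * Real.log ‖blaschkeProduct a z‖
  have hexp : (fun z => ‖blaschkeProduct a z‖ ^ p) =ᶠ[codiscreteWithin (sphere 0 |r|)]
      Real.exp ∘ u := by
    filter_upwards [compl_finite_mem_codiscreteWithin (finite_range a),
      self_mem_codiscreteWithin _] with z hza hz
    have hz1 : ‖z‖ ≤ 1 := by rw [mem_sphere_zero_iff_norm.1 hz, abs_of_pos hr]; exact hr1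
    have hB : blaschkeProduct a z ≠ 0 := Finset.prod_ne_zero_iff.2 fun k _ =>
      blaschkeFactor_ne_zero hz1 (ha k) fun h => hza ⟨k, h.symm⟩
    rw [Function.comp_apply, rpow_def_of_pos (norm_pos_iff.2 hB), mul_comm]
  have hcont : CircleIntegrable (fun z => ‖blaschkeProduct a z‖ ^ p) 0 r :=
    ContinuousOn.circleIntegrable' <| (continuousOn_norm_blaschkeProduct_rpow ha hp).mono <|
      sphere_subset_closedBall.trans (closedBall_subset_closedBall (by rwa [abs_of_pos hr]))
  have hu : CircleIntegrable u 0 r :=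
    ((MeromorphicOn.fun_prod fun k _ =>
      meromorphicOn_blaschkeFactor (a k) _).circleIntegrable_log_norm).const_mul p
  calc (∏ k, max r ‖a k‖) ^ p = Real.exp (circleAverage u 0 r) := by
        have hmax : ∀ k ∈ Finset.univ, 0 < max r ‖a k‖ := fun k _ =>
          hr.trans_le (le_max_left _ _)
        simp only [u, ← smul_eq_mul, circleAverage_fun_smul]
        rw [circleAverage_log_norm_blaschkeProduct ha hr hr1,
          rpow_def_of_pos (Finset.prod_pos hmax), Real.log_prod fun k hk => (hmax k hk).ne',
          smul_eq_mul, mul_comm]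
    _ ≤ circleAverage (Real.exp ∘ u) 0 r :=
        convexOn_exp.map_circleAverage_le continuous_exp hu (hcont.congr_codiscreteWithin hexp)
    _ = _ := (circleAverage_congr_codiscreteWithin hexp hr.ne').symm

theorem rpow_le_circleAverage_norm_blaschkeProduct_rpow (ha : ∀ k, ‖a k‖ < 1)
    {r : ℝ} (hr : 0 < r) (hr1 : r ≤ 1) {p : ℝ} (hp : 0 ≤ p) :
    r ^ (Fintype.card ι * p) ≤ circleAverage (fun z => ‖blaschkeProduct a z‖ ^ p) 0 r :=
  calc r ^ (Fintype.card ι * p) = (∏ _k : ι, r) ^ p := by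
        rw [Finset.prod_const, Finset.card_univ, rpow_mul hr.le, rpow_natCast]
    _ ≤ (∏ k, max r ‖a k‖) ^ p := rpow_le_rpow (by positivity)
        (Finset.prod_le_prod (fun _ _ => hr.le) fun _ _ => le_max_left _ _) hp
    _ ≤ _ := prod_max_rpow_le_circleAverage_norm_blaschkeProduct_rpow ha hr hr1 hp

theorem rpow_lt_circleAverage_norm_blaschkeProduct_rpow (ha : ∀ k, ‖a k‖ < 1)
    {r : ℝ} (hr : 0 < r) (hr1 : r ≤ 1) {p : ℝ} (hp : 0 < p) {j : ι} (hj : r < ‖a j‖) :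
    r ^ (Fintype.card ι * p) < circleAverage (fun z => ‖blaschkeProduct a z‖ ^ p) 0 r :=
  calc r ^ (Fintype.card ι * p) = (∏ _k : ι, r) ^ p := by
        rw [Finset.prod_const, Finset.card_univ, rpow_mul hr.le, rpow_natCast]
    _ < (∏ k, max r ‖a k‖) ^ p := rpow_lt_rpow (by positivity)
        (Finset.prod_lt_prod (fun _ _ => hr) (fun _ _ => le_max_left _ _)
          ⟨j, Finset.mem_univ _, hj.trans_le (le_max_right _ _)⟩) hp
    _ ≤ _ := prod_max_rpow_le_circleAverage_norm_blaschkeProduct_rpow ha hr hr1 hp.le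

theorem continuousOn_mul_circleAverage_norm_blaschkeProduct_rpow (ha : ∀ k, ‖a k‖ < 1) {p : ℝ}
    (hp : 0 ≤ p) :
    ContinuousOn (fun r => r * circleAverage (fun z => ‖blaschkeProduct a z‖ ^ p) 0 r)
      (Icc 0 1) :=
  continuousOn_id.mul <| ContinuousOn.circleAverage
    ((continuousOn_norm_blaschkeProduct_rpow ha hp).mono fun z hz => by simpa using hz.2)
    fun _ hr => hr.1

theorem two_pi_div_le_integral_norm_blaschkeProduct_rpow (ha : ∀ k, ‖a k‖ < 1) {p : ℝ}
    (hp : 0 ≤ p) :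
    2 * π / (2 + Fintype.card ι * p) ≤ ∫ z in ball (0 : ℂ) 1, ‖blaschkeProduct a z‖ ^ p := by
  have hq : 0 ≤ (Fintype.card ι : ℝ) * p := by positivity
  rw [integral_ball_eq_integral_circleAverage zero_le_one
      (continuousOn_norm_blaschkeProduct_rpow ha hp), two_pi_div_two_add_eq_integral (by linarith)]
  gcongr
  refine intervalIntegral.integral_mono_on_of_le_Ioo zero_le_one
    ((continuous_id.mul (continuous_rpow_const hq)).intervalIntegrable _ _)
    ((continuousOn_mul_circleAverage_norm_blaschkeProduct_rpow ha hp).intervalIntegrable_of_Icc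
      zero_le_one) fun r hr => ?_
  exact mul_le_mul_of_nonneg_left
    (rpow_le_circleAverage_norm_blaschkeProduct_rpow ha hr.1 hr.2.le hp) hr.1.le

theorem two_pi_div_lt_integral_norm_blaschkeProduct_rpow (ha : ∀ k, ‖a k‖ < 1) {p : ℝ}
    (hp : 0 < p) {j : ι} (hj : a j ≠ 0) :
    2 * π / (2 + Fintype.card ι * p) < ∫ z in ball (0 : ℂ) 1, ‖blaschkeProduct a z‖ ^ p := by
  have hq : 0 ≤ (Fintype.card ι : ℝ) * p := by positivity
  have haj : 0 < ‖a j‖ := norm_pos_iff.2 hj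
  rw [integral_ball_eq_integral_circleAverage zero_le_one
      (continuousOn_norm_blaschkeProduct_rpow ha hp.le),
    two_pi_div_two_add_eq_integral (by linarith)]
  gcongr
  refine intervalIntegral.integral_lt_integral_of_continuousOn_of_le_of_exists_lt zero_lt_one
    (continuous_id.mul (continuous_rpow_const hq)).continuousOn
    (continuousOn_mul_circleAverage_norm_blaschkeProduct_rpow ha hp.le) (fun r hr => ?_)
    ⟨‖a j‖ / 2, ⟨by positivity, by linarith [ha j]⟩, ?_⟩
  · exact mul_le_mul_of_nonneg_left
      (rpow_le_circleAverage_norm_blaschkeProduct_rpow ha hr.1 hr.2 hp.le) hr.1.le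
  · exact mul_lt_mul_of_pos_left (rpow_lt_circleAverage_norm_blaschkeProduct_rpow (j := j) ha
      (by positivity) (by linarith [ha j]) hp (by linarith)) (by positivity)

theorem exists_exp_mul_blaschkeProduct_eq_iff (s : ℝ) :
    (∃ τ : ℝ, ∀ z, exp (I * s) * blaschkeProduct a z = exp (I * τ) * z ^ Fintype.card ι) ↔
      ∀ k, a k = 0 := by
  constructor
  · rintro ⟨τ, hτ⟩ k
    have hzero : blaschkeProduct a (a k) = 0 :=
      Finset.prod_eq_zero (Finset.mem_univ k) (by simp [blaschkeFactor])
    have := hτ (a k)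
    rw [hzero, mul_zero, zero_eq_mul] at this
    exact pow_eq_zero_iff'.1 (this.resolve_left (exp_ne_zero _)) |>.1
  · intro h
    obtain rfl : a = 0 := funext h
    exact ⟨s, fun z => by rw [blaschkeProduct_zero]⟩

end BlaschkeProduct

theorem blaschke_lp_norm_bound_general (d : ℕ) (s : ℝ) (a : Fin d → ℂ)
    (ha : ∀ k, ‖a k‖ < 1) (p : ℝ) (hp : 1 ≤ p) :
    (2 * Real.pi / (2 + d * p) ≤
      ∫ z in {z : ℂ | ‖z‖ < 1},
        ‖Complex.exp (Complex.I * s) * ∏ k, (z - a k) / (1 - z * conj (a k))‖ ^ p) ∧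
    ((∫ z in {z : ℂ | ‖z‖ < 1},
        ‖Complex.exp (Complex.I * s) * ∏ k, (z - a k) / (1 - z * conj (a k))‖ ^ p) =
        2 * Real.pi / (2 + d * p) ↔
      ∃ τ : ℝ, ∀ z : ℂ,
        Complex.exp (Complex.I * s) * ∏ k, (z - a k) / (1 - z * conj (a k)) =
          Complex.exp (Complex.I * τ) * z ^ d) := by
  have hp0 : 0 < p := by linarith
  have hnorm : ∀ z, ‖exp (I * s) * blaschkeProduct a z‖ ^ p = ‖blaschkeProduct a z‖ ^ p := by
    intro z
    rw [norm_mul, mul_comm I, norm_exp_ofReal_mul_I, one_mul]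
  have hdisk : {z : ℂ | ‖z‖ < 1} = ball 0 1 := by ext; simp
  have hbound := two_pi_div_le_integral_norm_blaschkeProduct_rpow ha hp0.le
  have hiff := exists_exp_mul_blaschkeProduct_eq_iff (a := a) s
  simp only [Fintype.card_fin] at hbound hiff
  simp only [← blaschkeProduct_apply, hnorm, hdisk]
  rw [hiff]
  refine ⟨hbound, fun heq => ?_, fun hzero => ?_⟩
  · by_contra! ⟨j, hj⟩
    have hlt := two_pi_div_lt_integral_norm_blaschkeProduct_rpow ha hp0 hj
    rw [Fintype.card_fin] at hlt
    exact hlt.ne' heq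
  · obtain rfl : a = 0 := funext hzero
    simp only [blaschkeProduct_zero, Fintype.card_fin]
    exact integral_ball_norm_pow_rpow d hp0.le

theorem blaschke_lp_norm_bound (d : ℕ) (hd : 0 < d) (s : ℝ) (a : Fin d → ℂ)
    (ha : ∀ k, ‖a k‖ < 1) (p : ℝ) (hp : 1 ≤ p) :
    (2 * Real.pi / (2 + d * p) ≤
      ∫ z in {z : ℂ | ‖z‖ < 1},
        ‖Complex.exp (Complex.I * s) * ∏ k, (z - a k) / (1 - z * conj (a k))‖ ^ p) ∧
    ((∫ z in {z : ℂ | ‖z‖ < 1},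
        ‖Complex.exp (Complex.I * s) * ∏ k, (z - a k) / (1 - z * conj (a k))‖ ^ p) =
        2 * Real.pi / (2 + d * p) ↔
      ∃ τ : ℝ, ∀ z : ℂ,
        Complex.exp (Complex.I * s) * ∏ k, (z - a k) / (1 - z * conj (a k)) =
          Complex.exp (Complex.I * τ) * z ^ d) :=
  blaschke_lp_norm_bound_general d s a ha p hp
end
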